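/- For every σ > 0 and κ > 0, the continuous Tsallis entropy with index q = (1+2κ)/(1+κ) of the coupled exponential density equals S^T = (1/(q−1))·(1 − ∫₀^∞ p(x)^q dx) = 1 − (1/(1+κ))·ln_{κ/(1+κ)}(σ^(−1)) = 1 + 1/κ − σ^(−κ/(1+κ))/κ, where p(x) = (1/σ)·(1 + κ·x/σ)^(−(1+κ)/κ). -/

import Mathlib

/-!
Raising the coupled exponential density to the power `q` gives
`σ^(-q) (1 + κx/σ)^(-(1+κ)q/κ)`, a shifted and rescaled power `t^s` with `s < -1` as soon as
`κ < (1+κ)q`, so its integral over `(0, ∞)` is `σ^(1-q) / ((1+κ)q - κ)`. For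
`q = (1+2κ)/(1+κ)` the denominator is `1 + κ` and `1 - q = -κ/(1+κ)`.
-/

open Real MeasureTheory Set

theorem setIntegral_Ioi_comp_add_right {E : Type*} [NormedAddCommGroup E] [NormedSpace ℝ E]
    (f : ℝ → E) (a d : ℝ) :
    ∫ x in Ioi a, f (x + d) = ∫ x in Ioi (a + d), f x := by
  have := (measurePreserving_add_right volume d).setIntegral_preimage_emb
    (measurableEmbedding_addRight d) f (Ioi (a + d))
  simpa only [preimage_add_const_Ioi, add_sub_cancel_right] using this

theorem integral_Ioi_one_add_mul_rpow {a s : ℝ} (ha : 0 < a) (hs : s < -1) :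
    ∫ x in Ioi (0 : ℝ), (1 + a * x) ^ s = -1 / (a * (s + 1)) := by
  have h := integral_comp_mul_left_Ioi (fun y => (y + 1) ^ s) 0 ha
  simp only [mul_zero, smul_eq_mul] at h
  simp_rw [add_comm (1 : ℝ)]
  rw [h, setIntegral_Ioi_comp_add_right (· ^ s), zero_add,
    integral_Ioi_rpow_of_lt hs one_pos, one_rpow]
  field_simp

theorem integral_Ioi_coupledExp_rpow {σ κ q : ℝ} (hσ : 0 < σ) (hκ : 0 < κ)
    (hq : κ < (1 + κ) * q) :
    ∫ x in Ioi (0 : ℝ), ((1 / σ) * (1 + κ * x / σ) ^ (-(1 + κ) / κ)) ^ q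
      = σ ^ (1 - q) / ((1 + κ) * q - κ) := by
  have hpow : ∀ x ∈ Ioi (0 : ℝ), ((1 / σ) * (1 + κ * x / σ) ^ (-(1 + κ) / κ)) ^ q
      = σ ^ (-q) * (1 + κ / σ * x) ^ (-(1 + κ) / κ * q) := by
    intro x hx
    have hbase : 0 ≤ 1 + κ / σ * x := by have : (0 : ℝ) < x := hx; positivity
    rw [mul_div_right_comm, mul_rpow (by positivity) (rpow_nonneg hbase _), ← rpow_mul hbase,
      one_div, inv_rpow hσ.le, rpow_neg hσ.le]
  have hexp : -(1 + κ) / κ * q < -1 := by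
    rw [div_mul_eq_mul_div, div_lt_iff₀ hκ]
    linarith
  rw [setIntegral_congr_fun measurableSet_Ioi hpow, integral_const_mul,
    integral_Ioi_one_add_mul_rpow (div_pos hκ hσ) hexp, sub_eq_add_neg, rpow_add hσ, rpow_one]
  have hden : κ / σ * (-(1 + κ) / κ * q + 1) = -((1 + κ) * q - κ) / σ := by
    field_simp
    ring
  rw [hden, neg_div, one_div_div, div_neg, neg_neg]
  ring

/-- The continuous Tsallis entropy with index `q = (1+2κ)/(1+κ)` of the coupled
exponential density `p(x) = (1/σ)·(1 + κ·x/σ)^(−(1+κ)/κ)` equals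
`(1/(q−1))·(1 − ∫₀^∞ p(x)^q dx) = 1 − (1/(1+κ))·ln_{κ/(1+κ)}(σ⁻¹)
 = 1 + 1/κ − σ^(−κ/(1+κ))/κ`, where `ln_κ(x) = (x^κ − 1)/κ`. -/
theorem stmt_15 (σ κ : ℝ) (hσ : 0 < σ) (hκ : 0 < κ) :
    (1 / ((1 + 2 * κ) / (1 + κ) - 1)) *
        (1 - ∫ x in Set.Ioi (0 : ℝ),
          ((1 / σ) * (1 + κ * x / σ) ^ (-(1 + κ) / κ)) ^ ((1 + 2 * κ) / (1 + κ)))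
      = 1 - (1 / (1 + κ)) *
          (((σ⁻¹) ^ (κ / (1 + κ)) - 1) / (κ / (1 + κ)))
    ∧ (1 / ((1 + 2 * κ) / (1 + κ) - 1)) *
        (1 - ∫ x in Set.Ioi (0 : ℝ),
          ((1 / σ) * (1 + κ * x / σ) ^ (-(1 + κ) / κ)) ^ ((1 + 2 * κ) / (1 + κ)))
      = 1 + 1 / κ - σ ^ (-κ / (1 + κ)) / κ := by
  have h1κ : 0 < 1 + κ := by linarith
  have hq : (1 + κ) * ((1 + 2 * κ) / (1 + κ)) - κ = 1 + κ := by field_simp; ring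
  have hq1 : (1 + 2 * κ) / (1 + κ) - 1 = κ / (1 + κ) := by field_simp; ring
  have hexp : 1 - (1 + 2 * κ) / (1 + κ) = -κ / (1 + κ) := by field_simp; ring
  have hinv : σ⁻¹ ^ (κ / (1 + κ)) = σ ^ (-κ / (1 + κ)) := by
    rw [inv_rpow hσ.le, ← rpow_neg hσ.le, neg_div]
  rw [integral_Ioi_coupledExp_rpow hσ hκ (by rw [mul_div_cancel₀ _ h1κ.ne']; linarith),
    hq, hq1, hexp, hinv]
  constructor <;> field_simp <;> ring
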